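/- Let X₁, ..., Xₙ and Y₁, ..., Yₙ be independent Bernoulli random variables with P(Xᵢ = 1) = pᵢ and P(Yᵢ = 1) = p̄ᵢ where 0 ≤ pᵢ ≤ p̄ᵢ ≤ 1. Then P(∃ i, Yᵢ = 1) − P(∃ i, Xᵢ = 1) ≤ ∑ᵢ (∏_{j<i} (1 − p̄ⱼ)) · (p̄ᵢ − pᵢ). -/

import Mathlib

open MeasureTheory ProbabilityTheory Finset

-- algebraic lemma
lemma prod_sub_prod_le_aux (a b : ℕ → ℝ) (h0 : ∀ i, 0 ≤ b i) (hba : ∀ i, b i ≤ a i)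
    (ha1 : ∀ i, a i ≤ 1) :
    ∀ n, ∏ i ∈ range n, a i - ∏ i ∈ range n, b i ≤
      ∑ i ∈ range n, (∏ j ∈ range i, b j) * (a i - b i) := by
  intro n
  induction n with
  | zero => simp
  | succ n ih =>
    rw [Finset.prod_range_succ, Finset.prod_range_succ, Finset.sum_range_succ]
    have hbn : (0:ℝ) ≤ ∏ i ∈ range n, b i := Finset.prod_nonneg fun i _ => h0 i
    have han : ∏ i ∈ range n, b i ≤ ∏ i ∈ range n, a i :=
      Finset.prod_le_prod (fun i _ => h0 i) (fun i _ => hba i)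
    have key : (∏ i ∈ range n, a i) * a n - (∏ i ∈ range n, b i) * b n
        = ((∏ i ∈ range n, a i) - (∏ i ∈ range n, b i)) * a n
          + (∏ i ∈ range n, b i) * (a n - b n) := by ring
    rw [key]
    have h1 : ((∏ i ∈ range n, a i) - (∏ i ∈ range n, b i)) * a n
        ≤ (∏ i ∈ range n, a i) - (∏ i ∈ range n, b i) := by
      nlinarith [sub_nonneg.2 han, ha1 n, h0 n, hba n]
    linarith [ih]

lemma union_prob_eq {Ω : Type*} [MeasurableSpace Ω] (μ : Measure Ω) [IsProbabilityMeasure μ]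
    (n : ℕ) (f : Fin n → Ω → ℝ) (hm : ∀ i, Measurable (f i))
    (h01 : ∀ i ω, f i ω = 0 ∨ f i ω = 1)
    (hind : iIndepFun f μ) :
    (μ {ω | ∃ i, f i ω = 1}).toReal = 1 - ∏ i : Fin n, (1 - (μ {ω | f i ω = 1}).toReal) := by
  have hset : {ω | ∃ i, f i ω = 1}ᶜ = ⋂ i, f i ⁻¹' {0} := by
    ext ω
    simp only [Set.mem_compl_iff, Set.mem_setOf_eq, not_exists, Set.mem_iInter,
      Set.mem_preimage, Set.mem_singleton_iff]
    constructor
    · intro h i; rcases h01 i ω with h0 | h1; · exact h0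
      · exact absurd h1 (h i)
    · intro h i; rw [h i]; norm_num
  have hms : ∀ i, MeasurableSet {ω | f i ω = 1} := by
    intro i
    exact (hm i) (measurableSet_singleton 1)
  have hmU : MeasurableSet {ω | ∃ i, f i ω = 1} := by
    have : {ω | ∃ i, f i ω = 1} = ⋃ i, {ω | f i ω = 1} := by ext ω; simp
    rw [this]; exact MeasurableSet.iUnion fun i => hms i
  have hInter : μ (⋂ i, f i ⁻¹' {0}) = ∏ i, μ (f i ⁻¹' {0}) := by
    exact hind.meas_iInter fun i => ⟨{0}, measurableSet_singleton 0, rfl⟩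
  have hzero : ∀ i, μ (f i ⁻¹' {0}) = 1 - μ {ω | f i ω = 1} := by
    intro i
    have : f i ⁻¹' {0} = {ω | f i ω = 1}ᶜ := by
      ext ω
      simp only [Set.mem_preimage, Set.mem_singleton_iff, Set.mem_compl_iff, Set.mem_setOf_eq]
      constructor
      · intro h; rw [h]; norm_num
      · intro h; rcases h01 i ω with h0 | h1; · exact h0
        · exact absurd h1 h
    rw [this, prob_compl_eq_one_sub (hms i)]
  have hμU : μ {ω | ∃ i, f i ω = 1} = 1 - ∏ i, (1 - μ {ω | f i ω = 1}) := by
    have := prob_compl_eq_one_sub (μ := μ) hmU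
    rw [hset, hInter] at this
    have h2 : μ {ω | ∃ i, f i ω = 1} = 1 - μ ({ω | ∃ i, f i ω = 1}ᶜ) := by
      rw [prob_compl_eq_one_sub hmU]
      rw [ENNReal.sub_sub_cancel ENNReal.one_ne_top prob_le_one]
    rw [h2, hset, hInter]
    congr 1
    exact Finset.prod_congr rfl fun i _ => hzero i
  rw [hμU]
  rw [ENNReal.toReal_sub_of_le (by
      calc ∏ i, (1 - μ {ω | f i ω = 1}) ≤ ∏ i : Fin n, (1:ENNReal) :=
        Finset.prod_le_prod' fun i _ => tsub_le_self.trans_eq rfl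
      _ = 1 := by simp) ENNReal.one_ne_top]
  rw [ENNReal.toReal_one, ENNReal.toReal_prod]
  congr 1
  refine Finset.prod_congr rfl fun i _ => ?_
  rw [ENNReal.toReal_sub_of_le (prob_le_one) ENNReal.one_ne_top, ENNReal.toReal_one]

theorem bernoulli_union_prob_diff {Ω : Type*} [MeasurableSpace Ω]
    (μ : Measure Ω) [IsProbabilityMeasure μ] (n : ℕ)
    (X Y : Fin n → Ω → ℝ) (p pbar : Fin n → ℝ)
    (hXm : ∀ i, Measurable (X i)) (hYm : ∀ i, Measurable (Y i))
    (hX01 : ∀ i ω, X i ω = 0 ∨ X i ω = 1) (hY01 : ∀ i ω, Y i ω = 0 ∨ Y i ω = 1)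
    (hXind : iIndepFun X μ)
    (hYind : iIndepFun Y μ)
    (hp0 : ∀ i, 0 ≤ p i) (hle : ∀ i, p i ≤ pbar i) (hp1 : ∀ i, pbar i ≤ 1)
    (hpX : ∀ i, (μ {ω | X i ω = 1}).toReal = p i)
    (hpY : ∀ i, (μ {ω | Y i ω = 1}).toReal = pbar i) :
    (μ {ω | ∃ i, Y i ω = 1}).toReal - (μ {ω | ∃ i, X i ω = 1}).toReal ≤
      ∑ i : Fin n,
        (∏ j ∈ Finset.univ.filter (· < i), (1 - pbar j)) * (pbar i - p i) := by
  have hY := union_prob_eq μ n Y hYm hY01 hYind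
  have hX := union_prob_eq μ n X hXm hX01 hXind
  simp only [hpX] at hX
  simp only [hpY] at hY
  rw [hX, hY]
  set a : ℕ → ℝ := fun k => if h : k < n then 1 - p ⟨k, h⟩ else 1 with ha
  set b : ℕ → ℝ := fun k => if h : k < n then 1 - pbar ⟨k, h⟩ else 1 with hb
  have hprodp : ∏ i : Fin n, (1 - p i) = ∏ k ∈ range n, a k := by
    rw [← Fin.prod_univ_eq_prod_range]
    exact Finset.prod_congr rfl fun i _ => by simp [ha, i.isLt]
  have hprodpb : ∏ i : Fin n, (1 - pbar i) = ∏ k ∈ range n, b k := by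
    rw [← Fin.prod_univ_eq_prod_range]
    exact Finset.prod_congr rfl fun i _ => by simp [hb, i.isLt]
  have hfilter : ∀ i : Fin n, ∏ j ∈ Finset.univ.filter (· < i), (1 - pbar j)
      = ∏ k ∈ range i.val, b k := by
    intro i
    have h1 : Finset.univ.filter (· < i) = Finset.Iio i := by
      ext j; simp [Finset.mem_Iio]
    have h2 : range i.val = (Finset.Iio i).map Fin.valEmbedding := by
      rw [Fin.map_valEmbedding_Iio]; exact (Nat.Iio_eq_range _).symm ▸ rfl
    rw [h1, h2, Finset.prod_map]
    exact Finset.prod_congr rfl fun j hj => by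
      simp [hb, j.isLt]
  have hsum : ∑ i : Fin n, (∏ j ∈ Finset.univ.filter (· < i), (1 - pbar j)) * (pbar i - p i)
      = ∑ k ∈ range n, (∏ j ∈ range k, b j) * (a k - b k) := by
    rw [← Fin.sum_univ_eq_sum_range]
    refine Finset.sum_congr rfl fun i _ => ?_
    rw [hfilter i]
    congr 1
    simp [ha, hb, i.isLt]
  rw [hsum]
  have := prod_sub_prod_le_aux a b
    (fun i => by by_cases h : i < n <;> simp [hb, h] <;> linarith [hp1 ⟨i, h⟩, hle ⟨i,h⟩, hp0 ⟨i,h⟩])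
    (fun i => by by_cases h : i < n <;> simp [ha, hb, h] <;> linarith [hle ⟨i,h⟩])
    (fun i => by by_cases h : i < n <;> simp [ha, h] <;> linarith [hp0 ⟨i,h⟩]) n
  rw [hprodp, hprodpb]
  linarith
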